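/- Let G = (V,E) be a vertex-transitive finite simple graph with n = |V| vertices, and let β : ℝ₊^V → ℝ be a positive definite monotone gauge that is invariant under the automorphism group of G, i.e. β(σw) = β(w) for every automorphism σ of G and every w ∈ ℝ₊^V, where (σw)_{σ(i)} := w_i. Then β(𝟙)·β∘(𝟙) = n, where 𝟙 is the all-ones vector. -/

import Mathlib

open scoped BigOperators Pointwise

variable {V : Type*} [Fintype V] [DecidableEq V]

/-- Inner product on `ℝ^V`. -/
def ip (w z : V → ℝ) : ℝ := ∑ i, w i * z i

/-- `κ` is a positive definite monotone gauge on the nonnegative orthant of `ℝ^V`. -/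
def IsPDMGauge (κ : (V → ℝ) → ℝ) : Prop :=
  κ 0 = 0 ∧
  (∀ w : V → ℝ, 0 ≤ w → 0 ≤ κ w) ∧
  (∀ (c : ℝ) (w : V → ℝ), 0 < c → 0 ≤ w → κ (c • w) = c * κ w) ∧
  (∀ w z : V → ℝ, 0 ≤ w → 0 ≤ z → κ (w + z) ≤ κ w + κ z) ∧
  (∀ w : V → ℝ, 0 ≤ w → w ≠ 0 → 0 < κ w) ∧
  (∀ w z : V → ℝ, 0 ≤ w → w ≤ z → κ w ≤ κ z)

/-- The dual gauge `κ∘(z) = sup{⟨w,z⟩ : w ≥ 0, κ(w) ≤ 1}`. -/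
noncomputable def dualGauge (κ : (V → ℝ) → ℝ) (z : V → ℝ) : ℝ :=
  sSup {r : ℝ | ∃ w : V → ℝ, 0 ≤ w ∧ κ w ≤ 1 ∧ r = ip w z}

/-- The antiblocker of a subset of the nonnegative orthant. -/
def abl (X : Set (V → ℝ)) : Set (V → ℝ) := {y | 0 ≤ y ∧ ∀ x ∈ X, ip x y ≤ 1}

/-- A convex corner: compact, convex, nonempty interior, subset of the nonnegative
orthant, and lower-comprehensive. -/
def IsConvexCorner (C : Set (V → ℝ)) : Prop :=
  IsCompact C ∧ Convex ℝ C ∧ (interior C).Nonempty ∧ (∀ x ∈ C, 0 ≤ x) ∧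
  ∀ x y : V → ℝ, 0 ≤ x → x ≤ y → y ∈ C → x ∈ C

/-- Minkowski functional of a set. -/
noncomputable def minkowski (C : Set (V → ℝ)) (x : V → ℝ) : ℝ :=
  sInf {μ : ℝ | 0 ≤ μ ∧ x ∈ μ • C}

/-- Support function of a set. -/
noncomputable def suppFn (C : Set (V → ℝ)) (y : V → ℝ) : ℝ :=
  sSup {r : ℝ | ∃ x ∈ C, r = ip x y}

/-- A stable (independent) set of vertices. -/
def IsStableSet (G : SimpleGraph V) (S : Finset V) : Prop :=
  ∀ i ∈ S, ∀ j ∈ S, ¬ G.Adj i j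

/-- Weighted stability number `α(G,w)`. -/
noncomputable def alphaW (G : SimpleGraph V) (w : V → ℝ) : ℝ :=
  sSup {r : ℝ | ∃ S : Finset V, IsStableSet G S ∧ r = ∑ i ∈ S, w i}

/-- Stability number `α(G)`. -/
noncomputable def stabilityNumber (G : SimpleGraph V) : ℕ :=
  sSup {n : ℕ | ∃ S : Finset V, IsStableSet G S ∧ S.card = n}

/-- Weighted fractional chromatic number `χ_f(G,w)`. -/
noncomputable def chiF (G : SimpleGraph V) (w : V → ℝ) : ℝ :=
  sInf {r : ℝ | ∃ y : Finset V → ℝ,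
    (∀ S, 0 ≤ y S) ∧ (∀ S, ¬ IsStableSet G S → y S = 0) ∧
    (∀ i, w i ≤ ∑ S : Finset V, (if i ∈ S then y S else 0)) ∧
    r = ∑ S : Finset V, y S}

/-- The stable set polytope `STAB(G)`. -/
def STABset (G : SimpleGraph V) : Set (V → ℝ) :=
  convexHull ℝ {x : V → ℝ | ∃ S : Finset V, IsStableSet G S ∧
    x = fun i => if i ∈ S then (1 : ℝ) else 0}

/-- The fractional stable set polytope `QSTAB(G)`. -/
def QSTABset (H : SimpleGraph V) : Set (V → ℝ) :=
  {x | 0 ≤ x ∧ ∀ K : Finset V, H.IsClique (↑K : Set V) → ∑ i ∈ K, x i ≤ 1}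

/-- The set of (real) eigenvalues of a matrix. -/
def spectrumSet (M : Matrix V V ℝ) : Set ℝ :=
  {t | ∃ x : V → ℝ, x ≠ 0 ∧ M.mulVec x = t • x}

/-- Largest eigenvalue. -/
noncomputable def lambdaMax (M : Matrix V V ℝ) : ℝ := sSup (spectrumSet M)

/-- Smallest eigenvalue. -/
noncomputable def lambdaMin (M : Matrix V V ℝ) : ℝ := sInf (spectrumSet M)

/-- Positive semidefinite square root (zero on non-PSD matrices). -/
noncomputable def psdSqrt (M : Matrix V V ℝ) : Matrix V V ℝ :=
  letI := Classical.dec M.PosSemidef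
  if h : M.PosSemidef then
    h.1.eigenvectorUnitary.1 * Matrix.diagonal ((↑) ∘ (√·) ∘ h.1.eigenvalues) *
      (star h.1.eigenvectorUnitary : Matrix V V ℝ)
  else 0

/-- `Â = A / (-λ_min(A))` for nonzero `A`, and `0̂ = 0`. -/
noncomputable def hatM (A : Matrix V V ℝ) : Matrix V V ℝ :=
  if A = 0 then 0 else (-(lambdaMin A))⁻¹ • A

/-- `A` is a generalized adjacency matrix of `G`: symmetric, with `A i j = 0`
whenever `i` and `j` are non-adjacent (in particular on the diagonal). -/
def IsGenAdj (G : SimpleGraph V) (A : Matrix V V ℝ) : Prop :=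
  A.IsSymm ∧ ∀ i j, ¬ G.Adj i j → A i j = 0

/-- Weighted Hoffman bound `H(A,w) = λ_max(W^{1/2}(I+Â)W^{1/2})`, `W = Diag w`. -/
noncomputable def hoffman (A : Matrix V V ℝ) (w : V → ℝ) : ℝ :=
  lambdaMax (psdSqrt (Matrix.diagonal w) * (1 + hatM A) * psdSqrt (Matrix.diagonal w))

/-- The feasible region `𝒰_A` of the SDP defining `Υ(A,·)`. -/
def Uset (A : Matrix V V ℝ) : Set (V → ℝ) :=
  {x | 0 ≤ x ∧ ((1 : Matrix V V ℝ) -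
    psdSqrt (1 + hatM A) * Matrix.diagonal x * psdSqrt (1 + hatM A)).PosSemidef}

/-- `Υ(A,w) = max{⟨w,x⟩ : x ≥ 0, (I+Â)^{1/2} Diag(x) (I+Â)^{1/2} ⪯ I}`. -/
noncomputable def upsilon (A : Matrix V V ℝ) (w : V → ℝ) : ℝ :=
  sSup {r : ℝ | ∃ x ∈ Uset A, r = ip w x}

/-- The diagonal of a matrix, as a vector. -/
def diagVec (M : Matrix V V ℝ) : V → ℝ := fun i => M i i

/-- The convex corner `ℋ_A`. -/
def Hset (A : Matrix V V ℝ) : Set (V → ℝ) :=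
  {x | 0 ≤ x ∧ ∃ Y : Matrix V V ℝ, Y.PosSemidef ∧ Y.trace ≤ 1 ∧
    ∀ i, x i ≤ diagVec (psdSqrt (1 + hatM A) * Y * psdSqrt (1 + hatM A)) i}

/-- Objective function of Luz's convex quadratic program:
`2⟨w,x⟩ − ⟨x, W^{1/2}(I+Â)W^{1/2} x⟩`. -/
noncomputable def luzObj (A : Matrix V V ℝ) (w x : V → ℝ) : ℝ :=
  2 * ip w x - ∑ i, x i *
    ((psdSqrt (Matrix.diagonal w) * (1 + hatM A) * psdSqrt (Matrix.diagonal w)).mulVec x) i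

/-- Luz's bound `ℓ(A,w)` as a real number (supremum of the CQP objective). -/
noncomputable def luz (A : Matrix V V ℝ) (w : V → ℝ) : ℝ :=
  sSup {r : ℝ | ∃ x : V → ℝ, 0 ≤ x ∧ r = luzObj A w x}

/-- Luz's bound `ℓ(A,w)` with values in `ℝ ∪ {±∞}`. -/
noncomputable def luzE (A : Matrix V V ℝ) (w : V → ℝ) : EReal :=
  sSup {r : EReal | ∃ x : V → ℝ, 0 ≤ x ∧ r = ((luzObj A w x : ℝ) : EReal)}

/-- The theta body `TH(G)`. -/
def THbody (G : SimpleGraph V) : Set (V → ℝ) :=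
  {x | 0 ≤ x ∧ ∃ X : Matrix V V ℝ, X.PosSemidef ∧ (∀ i, X i i = x i) ∧
    (∀ i j, G.Adj i j → X i j = 0) ∧
    (Matrix.fromBlocks (1 : Matrix Unit Unit ℝ) (Matrix.of fun _ j => x j)
      (Matrix.of fun i _ => x i) X).PosSemidef}

/-- Weighted Lovász theta number `θ(G,w)`. -/
noncomputable def thetaW (G : SimpleGraph V) (w : V → ℝ) : ℝ :=
  sSup {r : ℝ | ∃ x ∈ THbody G, r = ip w x}

private lemma gauge_finset_sum_le {β : (V → ℝ) → ℝ} (hβ : IsPDMGauge β)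
    {ι : Type*} (F : Finset ι) (f : ι → V → ℝ) (hf : ∀ e ∈ F, 0 ≤ f e) :
    β (∑ e ∈ F, f e) ≤ ∑ e ∈ F, β (f e) := by
  classical
  induction F using Finset.cons_induction with
  | empty => simp [hβ.1]
  | cons a F ha ih =>
    rw [Finset.sum_cons, Finset.sum_cons]
    have h1 : β (f a + ∑ e ∈ F, f e) ≤ β (f a) + β (∑ e ∈ F, f e) :=
      hβ.2.2.2.1 _ _ (hf a (Finset.mem_cons_self _ _))
        (Finset.sum_nonneg fun e he => hf e (Finset.mem_cons_of_mem he))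
    have h2 := ih (fun e he => hf e (Finset.mem_cons_of_mem he))
    linarith

/-- for a vertex-transitive graph `G` and an automorphism-invariant
positive definite monotone gauge `β`, one has `β(𝟙)·β∘(𝟙) = n`. -/
theorem vertexTransitive_gauge_product (G : SimpleGraph V) (β : (V → ℝ) → ℝ)
    (hβ : IsPDMGauge β)
    (hinv : ∀ (σ : G ≃g G) (w : V → ℝ), 0 ≤ w → β (fun i => w (σ.symm i)) = β w)
    (hvt : ∀ i j : V, ∃ σ : G ≃g G, σ i = j) :
    β 1 * dualGauge β 1 = Fintype.card V := by
  classical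
  obtain ⟨h0, hnn, hhom, hsub, hpd, hmono⟩ := hβ
  rcases isEmpty_or_nonempty V with hV | hV
  · have h1 : (1 : V → ℝ) = 0 := funext fun i => (hV.false i).elim
    simp [h1, h0]
  set n : ℝ := (Fintype.card V : ℝ) with hn
  have hnpos : (0:ℝ) < n := by
    rw [hn]; exact_mod_cast Fintype.card_pos
  have h1nn : (0 : V → ℝ) ≤ 1 := fun i => zero_le_one
  have h1ne : (1 : V → ℝ) ≠ 0 := by
    intro h
    have := congrFun h (Classical.arbitrary V)
    norm_num at this
  set b := β 1 with hb
  have hbpos : 0 < b := hpd 1 h1nn h1ne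
  -- the finset of automorphisms (as permutations)
  set S : Set (Equiv.Perm V) := {e | ∃ σ : G ≃g G, σ.toEquiv = e} with hS
  set F : Finset (Equiv.Perm V) := (Set.toFinite S).toFinset with hF
  have hmemF : ∀ e, e ∈ F ↔ ∃ σ : G ≃g G, σ.toEquiv = e := by
    intro e; rw [hF, Set.Finite.mem_toFinset]; rfl
  have hidF : (Equiv.refl V) ∈ F := (hmemF _).mpr ⟨RelIso.refl G.Adj, rfl⟩
  have hFne : F.Nonempty := ⟨_, hidF⟩
  set m : ℝ := (F.card : ℝ) with hm
  have hmpos : (0:ℝ) < m := by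
    rw [hm]; exact_mod_cast Finset.card_pos.mpr hFne
  -- key upper bound
  have key : ∀ w : V → ℝ, 0 ≤ w → β w ≤ 1 → ip w 1 ≤ n / b := by
    intro w hw hw1
    have hip : ip w 1 = ∑ i, w i := by simp [ip]
    rcases eq_or_lt_of_le (Finset.sum_nonneg fun i _ => hw i) with hs | hs
    · rw [hip, ← hs]
      positivity
    set s : ℝ := ∑ i, w i with hsdef
    -- constancy of the symmetrized vector
    have hconst : ∀ i i' : V, (∑ e ∈ F, w (e.symm i)) = ∑ e ∈ F, w (e.symm i') := by
      intro i i'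
      obtain ⟨σ, hσ⟩ := hvt i i'
      apply Finset.sum_nbij' (fun e => e.trans σ.toEquiv) (fun e => e.trans σ.toEquiv.symm)
      · intro e he
        obtain ⟨τ, hτ⟩ := (hmemF e).mp he
        exact (hmemF _).mpr ⟨τ.trans σ, by rw [← hτ]; rfl⟩
      · intro e he
        obtain ⟨τ, hτ⟩ := (hmemF e).mp he
        exact (hmemF _).mpr ⟨τ.trans σ.symm, by rw [← hτ]; rfl⟩
      · intro e _; ext x; exact Equiv.symm_apply_apply _ _
      · intro e _; ext x; exact Equiv.apply_symm_apply _ _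
      · intro e _
        have hσi : σ.toEquiv.symm i' = i := by
          rw [Equiv.symm_apply_eq]; exact hσ.symm
        simp [Equiv.symm_trans_apply, hσi]
    set i0 : V := Classical.arbitrary V
    set c : ℝ := ∑ e ∈ F, w (e.symm i0) with hc
    -- total sum identity
    have htot : n * c = m * s := by
      have h1 : ∑ i : V, (∑ e ∈ F, w (e.symm i)) = ∑ i : V, c := by
        apply Finset.sum_congr rfl
        intro i _
        exact hconst i i0
      have h2 : ∑ i : V, (∑ e ∈ F, w (e.symm i)) = ∑ e ∈ F, ∑ i : V, w (e.symm i) :=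
        Finset.sum_comm
      have h3 : ∀ e : Equiv.Perm V, ∑ i : V, w (e.symm i) = s :=
        fun e => Equiv.sum_comp e.symm w
      rw [h1] at h2
      simp only [h3, Finset.sum_const, nsmul_eq_mul] at h2
      rw [hn, hm, ← Finset.card_univ]
      exact h2
    have hcpos : 0 < c := by
      have : c = m * s / n := by field_simp; linarith [htot]
      rw [this]; positivity
    -- β of the symmetrized vector
    have hzle : β (fun i => c) ≤ m := by
      have hz : (fun _ : V => c) = ∑ e ∈ F, (fun i => w (e.symm i)) := by
        ext i
        rw [Finset.sum_apply]
        exact hconst i0 i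
      rw [hz]
      calc β (∑ e ∈ F, (fun i => w (e.symm i)))
          ≤ ∑ e ∈ F, β (fun i => w (e.symm i)) :=
            gauge_finset_sum_le ⟨h0, hnn, hhom, hsub, hpd, hmono⟩ F _
              (fun e _ => fun i => hw (e.symm i))
        _ ≤ ∑ e ∈ F, 1 := by
            apply Finset.sum_le_sum
            intro e he
            obtain ⟨σ, hσ⟩ := (hmemF e).mp he
            have : (fun i => w (e.symm i)) = fun i => w (σ.symm i) := by
              rw [← hσ]; rfl
            rw [this, hinv σ w hw]; exact hw1
        _ = m := by rw [Finset.sum_const, nsmul_eq_mul, mul_one]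
    have hzb : β (fun _ : V => c) = c * b := by
      have : (fun _ : V => c) = c • (1 : V → ℝ) := by
        ext i; simp
      rw [this, hhom c 1 hcpos h1nn]
    rw [hzb] at hzle
    -- conclude
    rw [hip]
    have hs' : s = n * c / m := by field_simp; linarith [htot]
    rw [hs']
    rw [div_le_div_iff₀ hmpos hbpos]
    nlinarith [mul_le_mul_of_nonneg_left hzle hnpos.le]
  -- compute the dual gauge
  have hmem : n / b ∈ {r : ℝ | ∃ w : V → ℝ, 0 ≤ w ∧ β w ≤ 1 ∧ r = ip w 1} := by
    refine ⟨b⁻¹ • 1, fun i => by simpa using inv_nonneg.mpr hbpos.le, ?_, ?_⟩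
    · rw [hhom b⁻¹ 1 (by positivity) h1nn, inv_mul_cancel₀ hbpos.ne']
    · simp [ip, div_eq_mul_inv, mul_comm]; exact Or.inl hn
  have hub : ∀ r ∈ {r : ℝ | ∃ w : V → ℝ, 0 ≤ w ∧ β w ≤ 1 ∧ r = ip w 1}, r ≤ n / b := by
    rintro r ⟨w, hw, hw1, rfl⟩
    exact key w hw hw1
  have hdg : dualGauge β 1 = n / b := by
    apply le_antisymm
    · exact csSup_le ⟨_, hmem⟩ hub
    · exact le_csSup ⟨n / b, hub⟩ hmem
  rw [hdg, mul_comm, div_mul_cancel₀ _ hbpos.ne']
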